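/- The restriction map from the ℤ-linear dual of the multilinear part T_{1,...,1}(x_1,...,x_n) of the tensor algebra to the ℤ-linear dual of the multilinear part Lie(n) of the free Lie algebra is surjective; i.e., every ℤ-linear functional on Lie(n) extends to a ℤ-linear functional on T_{1,...,1}. -/

import Mathlib

noncomputable section

/-- Multilinear Lie monomials in the free (tensor) algebra over `ℤ` on `Fin n`. -/
inductive LieMono (n : ℕ) : Finset (Fin n) → FreeAlgebra ℤ (Fin n) → Prop
  | gen (i : Fin n) : LieMono n {i} (FreeAlgebra.ι ℤ i)
  | bracket {s t : Finset (Fin n)} {a b : FreeAlgebra ℤ (Fin n)} :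
      LieMono n s a → LieMono n t b → Disjoint s t → LieMono n (s ∪ t) (a * b - b * a)

/-- The multilinear part `Lie(n)` of the free Lie algebra over `ℤ`. -/
def LieN (n : ℕ) : Submodule ℤ (FreeAlgebra ℤ (Fin n)) :=
  Submodule.span ℤ {x | LieMono n Finset.univ x}

/-- The multilinear word `e_σ = x_{σ(1)} ⊗ ⋯ ⊗ x_{σ(n)}`. -/
def word (n : ℕ) (σ : Equiv.Perm (Fin n)) : FreeAlgebra ℤ (Fin n) :=
  (List.ofFn fun i => FreeAlgebra.ι ℤ (σ i)).prod

/-- The multilinear part `T_{1,…,1}(x_1,…,x_n)` of the tensor algebra: the span of the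
words containing each generator exactly once. -/
def T11 (n : ℕ) : Submodule ℤ (FreeAlgebra ℤ (Fin n)) :=
  Submodule.span ℤ (Set.range (word n))

/-!
Fix a letter `i`. By the Jacobi identity, every multilinear Lie monomial is an integral combination
of left-normed brackets `[xᵢ, x_{u₁}, …, x_{u_{n-1}}]` starting with `xᵢ`. In the expansion of such
a bracket, the only word beginning with `xᵢ` is `xᵢ x_{u₁} ⋯ x_{u_{n-1}}`, with coefficient `1`.
Hence the coefficient functionals of the words `i :: u` on the tensor algebra are biorthogonal to
these brackets, and `φ` extends as `∑ᵤ φ [xᵢ, x_{u₁}, …] · coeff_{i :: u}`.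
-/

namespace FreeAlgebra

section CommSemiring

variable (R : Type*) {X : Type*} [CommSemiring R]

def ofList (w : List X) : FreeAlgebra R X := (w.map (ι R)).prod

@[simp] lemma ofList_nil : ofList R ([] : List X) = 1 := rfl

@[simp] lemma ofList_cons (j : X) (w : List X) : ofList R (j :: w) = ι R j * ofList R w := by
  simp [ofList]

lemma ofList_append (v w : List X) : ofList R (v ++ w) = ofList R v * ofList R w := by
  simp [ofList]

@[simp] lemma ofList_singleton (j : X) : ofList R [j] = ι R j := by
  simp [ofList]

variable {R}

def coeff (w : List X) : FreeAlgebra R X →ₗ[R] R :=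
  Finsupp.lapply (FreeMonoid.ofList w) ∘ₗ (MonoidAlgebra.coeffLinearEquiv R).toLinearMap ∘ₗ
    equivMonoidAlgebraFreeMonoid.toLinearMap

lemma equivMonoidAlgebraFreeMonoid_ofList (w : List X) :
    equivMonoidAlgebraFreeMonoid (ofList R w) = MonoidAlgebra.single (FreeMonoid.ofList w) 1 := by
  induction w with
  | nil => simp [MonoidAlgebra.one_def]
  | cons j w ih =>
    have hj : equivMonoidAlgebraFreeMonoid (ι R j) = MonoidAlgebra.single (FreeMonoid.of j) 1 := by
      simp [equivMonoidAlgebraFreeMonoid]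
    rw [ofList_cons, map_mul, ih, hj, MonoidAlgebra.single_mul_single, one_mul]
    rfl

lemma coeff_apply (w : List X) (x : FreeAlgebra R X) :
    coeff w x = (equivMonoidAlgebraFreeMonoid x).coeff (FreeMonoid.ofList w) := rfl

lemma coeff_ofList [DecidableEq X] (v w : List X) :
    coeff w (ofList R v) = if v = w then 1 else 0 := by
  classical
  rw [coeff_apply, equivMonoidAlgebraFreeMonoid_ofList, MonoidAlgebra.coeff_single,
    Finsupp.single_apply]
  simp

variable (R) in
def spanNotStartingWith (i : X) : Submodule R (FreeAlgebra R X) :=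
  Submodule.span R {x | ∃ w : List X, w.head? ≠ some i ∧ x = ofList R w}

lemma ofList_mem_spanNotStartingWith {i : X} {w : List X} (hw : w.head? ≠ some i) :
    ofList R w ∈ spanNotStartingWith R i :=
  Submodule.subset_span ⟨w, hw, rfl⟩

lemma ι_mul_mem_spanNotStartingWith {i j : X} (hj : j ≠ i) {x : FreeAlgebra R X}
    (hx : x ∈ spanNotStartingWith R i) : ι R j * x ∈ spanNotStartingWith R i := by
  refine (Submodule.map_span_le (LinearMap.mulLeft R (ι R j)) _ _).2 ?_ ⟨x, hx, rfl⟩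
  rintro _ ⟨w, -, rfl⟩
  simpa using ofList_mem_spanNotStartingWith (R := R) (w := j :: w) (by simpa using hj)

lemma mul_ι_mem_spanNotStartingWith {i j : X} (hj : j ≠ i) {x : FreeAlgebra R X}
    (hx : x ∈ spanNotStartingWith R i) : x * ι R j ∈ spanNotStartingWith R i := by
  refine (Submodule.map_span_le (LinearMap.mulRight R (ι R j)) _ _).2 ?_ ⟨x, hx, rfl⟩
  rintro _ ⟨w, hw, rfl⟩
  have hwj : (w ++ [j]).head? ≠ some i := by
    cases w with
    | nil => simpa using hj
    | cons => simpa using hw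
  simpa [ofList_append] using ofList_mem_spanNotStartingWith (R := R) hwj

lemma coeff_cons_eq_zero_of_mem_spanNotStartingWith [DecidableEq X] {i : X} (w : List X)
    {x : FreeAlgebra R X} (hx : x ∈ spanNotStartingWith R i) : coeff (i :: w) x = 0 := by
  induction hx using Submodule.span_induction with
  | mem _ hy =>
    obtain ⟨v, hv, rfl⟩ := hy
    rw [coeff_ofList, if_neg]
    rintro rfl
    simp at hv
  | zero => simp
  | add _ _ _ _ hx hy => simp [hx, hy]
  | smul _ _ _ hx => simp [hx]

end CommSemiring

variable {R X : Type*} [CommRing R]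

variable (R) in
def leftNormed (i : X) (u : List X) : FreeAlgebra R X :=
  u.foldl (fun a j => a * ι R j - ι R j * a) (ι R i)

@[simp] lemma leftNormed_nil (i : X) : leftNormed R i [] = ι R i := rfl

lemma leftNormed_append_singleton (i : X) (u : List X) (j : X) :
    leftNormed R i (u ++ [j]) = leftNormed R i u * ι R j - ι R j * leftNormed R i u := by
  simp [leftNormed, List.foldl_append]

lemma leftNormed_sub_ofList_mem {i : X} {u : List X} (hu : i ∉ u) :
    leftNormed R i u - ofList R (i :: u) ∈ spanNotStartingWith R i := by
  induction u using List.reverseRecOn with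
  | nil => simp
  | append_singleton u j ih =>
    simp only [List.mem_append, List.mem_singleton, not_or] at hu
    have hji : j ≠ i := Ne.symm hu.2
    set e := leftNormed R i u - ofList R (i :: u)
    have hsplit : leftNormed R i (u ++ [j]) - ofList R (i :: (u ++ [j]))
        = e * ι R j - ofList R (j :: i :: u) - ι R j * e := by
      rw [leftNormed_append_singleton, ← List.cons_append, ofList_append, ofList_singleton,
        ofList_cons R j]
      simp only [e]
      noncomm_ring
    rw [hsplit]
    refine sub_mem (sub_mem (mul_ι_mem_spanNotStartingWith hji (ih hu.1)) ?_)
      (ι_mul_mem_spanNotStartingWith hji (ih hu.1))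
    exact ofList_mem_spanNotStartingWith (by simpa using hji)

/-- Among the words `i :: w`, the bracket `[xᵢ, x_{u₁}, …, x_{uₖ}]` only involves `i :: u`, since
every other word of its expansion starts with some `uⱼ ≠ i`. -/
lemma coeff_cons_leftNormed [DecidableEq X] {i : X} {u : List X} (hu : i ∉ u) (w : List X) :
    coeff (i :: w) (leftNormed R i u) = if u = w then 1 else 0 := by
  rw [← sub_add_cancel (leftNormed R i u) (ofList R (i :: u)), map_add,
    coeff_cons_eq_zero_of_mem_spanNotStartingWith w (leftNormed_sub_ofList_mem hu), zero_add,
    coeff_ofList]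
  simp

end FreeAlgebra

theorem LinearMap.exists_extend_of_biorthogonal {R M ι : Type*} [CommSemiring R]
    [AddCommMonoid M] [Module R M] [Finite ι] [DecidableEq ι] {L : Submodule R M} {b : ι → M}
    (hbL : ∀ i, b i ∈ L) (hLb : L ≤ Submodule.span R (Set.range b)) (c : ι → M →ₗ[R] R)
    (hcb : ∀ i j, c i (b j) = if i = j then 1 else 0) (φ : L →ₗ[R] R) :
    ∃ ψ : M →ₗ[R] R, ψ ∘ₗ L.subtype = φ := by
  have := Fintype.ofFinite ι
  refine ⟨∑ i, φ ⟨b i, hbL i⟩ • c i, ?_⟩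
  have hspan : Submodule.span R (Set.range fun i => (⟨b i, hbL i⟩ : L)) = ⊤ :=
    (Submodule.span_range_subtype_eq_top_iff L hbL).2
      (le_antisymm (Submodule.span_le.2 (Set.range_subset_iff.2 hbL)) hLb)
  refine LinearMap.ext_on_range hspan fun j => ?_
  simp [hcb]

section LieMonomials

open FreeAlgebra

variable {n : ℕ}

def leftNormedSpan (i : Fin n) (s : Finset (Fin n)) : Submodule ℤ (FreeAlgebra ℤ (Fin n)) :=
  Submodule.span ℤ
    {x | ∃ u : List (Fin n), (i :: u).Nodup ∧ (i :: u).toFinset = s ∧ x = leftNormed ℤ i u}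

lemma LieMono.nonempty {s : Finset (Fin n)} {a : FreeAlgebra ℤ (Fin n)} (h : LieMono n s a) :
    s.Nonempty := by
  induction h with
  | gen i => exact Finset.singleton_nonempty i
  | bracket _ _ _ ih _ => exact ih.mono Finset.subset_union_left

lemma lieMono_leftNormed {i : Fin n} {u : List (Fin n)} (h : (i :: u).Nodup) :
    LieMono n (i :: u).toFinset (leftNormed ℤ i u) := by
  induction u using List.reverseRecOn with
  | nil => simpa using LieMono.gen i
  | append_singleton u j ih =>
    rw [← List.cons_append, List.nodup_append] at h
    have hj : j ∉ (i :: u).toFinset := fun hj => h.2.2 j (List.mem_toFinset.1 hj) j (by simp) rfl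
    have hb := LieMono.bracket (ih h.1) (LieMono.gen j) (Finset.disjoint_singleton_right.2 hj)
    rw [← List.cons_append, List.toFinset_append, leftNormed_append_singleton]
    simpa using hb

lemma mul_ι_sub_ι_mul_mem_leftNormedSpan {i j : Fin n} {s : Finset (Fin n)} (hj : j ∉ s)
    {a : FreeAlgebra ℤ (Fin n)} (ha : a ∈ leftNormedSpan i s) :
    a * ι ℤ j - ι ℤ j * a ∈ leftNormedSpan i (s ∪ {j}) := by
  refine (Submodule.map_span_le (LinearMap.mulRight ℤ (ι ℤ j) - LinearMap.mulLeft ℤ (ι ℤ j))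
    _ _).2 ?_ ⟨a, ha, rfl⟩
  rintro _ ⟨u, hnd, rfl, rfl⟩
  refine Submodule.subset_span ⟨u ++ [j], ?_, ?_, (leftNormed_append_singleton ..).symm⟩
  · rw [← List.cons_append, List.nodup_append]
    exact ⟨hnd, List.nodup_singleton j, fun x hx y hy hxy => hj (by simp_all)⟩
  · rw [← List.cons_append, List.toFinset_append]
    simp

lemma LieMono.commutator_mem_leftNormedSpan {t : Finset (Fin n)} {b : FreeAlgebra ℤ (Fin n)}
    (hb : LieMono n t b) {i : Fin n} {s : Finset (Fin n)} {a : FreeAlgebra ℤ (Fin n)}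
    (hst : Disjoint s t) (ha : a ∈ leftNormedSpan i s) :
    a * b - b * a ∈ leftNormedSpan i (s ∪ t) := by
  induction hb generalizing s a with
  | gen j => exact mul_ι_sub_ι_mul_mem_leftNormedSpan (Finset.disjoint_singleton_right.1 hst) ha
  | @bracket t₁ t₂ b₁ b₂ _ _ h₁₂ ih₁ ih₂ =>
    rw [Finset.disjoint_union_right] at hst
    have h₁ := ih₂ (Finset.disjoint_union_left.2 ⟨hst.2, h₁₂⟩) (ih₁ hst.1 ha)
    have h₂ := ih₁ (Finset.disjoint_union_left.2 ⟨hst.1, h₁₂.symm⟩) (ih₂ hst.2 ha)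
    rw [Finset.union_assoc] at h₁
    rw [Finset.union_assoc, Finset.union_comm t₂] at h₂
    have jacobi : a * (b₁ * b₂ - b₂ * b₁) - (b₁ * b₂ - b₂ * b₁) * a
        = ((a * b₁ - b₁ * a) * b₂ - b₂ * (a * b₁ - b₁ * a))
          - ((a * b₂ - b₂ * a) * b₁ - b₁ * (a * b₂ - b₂ * a)) := by
      noncomm_ring
    rw [jacobi]
    exact sub_mem h₁ h₂

lemma LieMono.mem_leftNormedSpan {s : Finset (Fin n)} {a : FreeAlgebra ℤ (Fin n)}
    (h : LieMono n s a) {i : Fin n} (hi : i ∈ s) : a ∈ leftNormedSpan i s := by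
  induction h with
  | gen j =>
    obtain rfl := Finset.mem_singleton.1 hi
    exact Submodule.subset_span ⟨[], by simp, by simp, rfl⟩
  | @bracket s t a b ha hb hst iha ihb =>
    rcases Finset.mem_union.1 hi with hi | hi
    · exact hb.commutator_mem_leftNormedSpan hst (iha hi)
    · rw [← neg_sub, Finset.union_comm]
      exact neg_mem (ha.commutator_mem_leftNormedSpan hst.symm (ihb hi))

/-- The left-normed brackets `[xᵢ, x_{u₁}, …, x_{u_{n-1}}]` with `u ∈ dynkinIndex i` form a basis
of `Lie(n)`. -/
def dynkinIndex (i : Fin n) : Set (List (Fin n)) :=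
  {u | (i :: u).Nodup ∧ (i :: u).toFinset = Finset.univ}

lemma dynkinIndex_finite (i : Fin n) : (dynkinIndex i).Finite := by
  refine (List.finite_length_le (Fin n) n).subset fun u hu => ?_
  have := hu.1.length_le_card
  simp only [List.length_cons, Fintype.card_fin] at this
  exact Nat.le_of_succ_le this

lemma leftNormed_mem_lieN {i : Fin n} {u : List (Fin n)} (hu : u ∈ dynkinIndex i) :
    leftNormed ℤ i u ∈ LieN n :=
  Submodule.subset_span (hu.2 ▸ lieMono_leftNormed hu.1)

lemma lieN_le_span_leftNormed (i : Fin n) :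
    LieN n ≤ Submodule.span ℤ (Set.range fun u : dynkinIndex i => leftNormed ℤ i u) := by
  refine Submodule.span_le.2 fun a ha => ?_
  refine Submodule.span_mono ?_ (ha.mem_leftNormedSpan (Finset.mem_univ i))
  rintro _ ⟨u, hnd, hu, rfl⟩
  exact ⟨⟨u, hnd, hu⟩, rfl⟩

lemma lieN_zero : LieN 0 = ⊥ :=
  Submodule.span_eq_bot.2 fun _ ha => absurd ha.nonempty (by simp)

lemma LieN.exists_extend (φ : LieN n →ₗ[ℤ] ℤ) :
    ∃ ψ : FreeAlgebra ℤ (Fin n) →ₗ[ℤ] ℤ, ψ ∘ₗ (LieN n).subtype = φ := by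
  rcases n with _ | m
  · refine ⟨0, LinearMap.ext fun x => ?_⟩
    obtain rfl : x = 0 := Subtype.ext (by simpa [lieN_zero] using x.2)
    simp
  · have := (dynkinIndex_finite (0 : Fin (m + 1))).to_subtype
    refine LinearMap.exists_extend_of_biorthogonal (fun u => leftNormed_mem_lieN u.2)
      (lieN_le_span_leftNormed 0) (fun u => coeff (0 :: (u : List (Fin (m + 1))))) ?_ φ
    intro u v
    refine (coeff_cons_leftNormed (List.nodup_cons.1 v.2.1).1 _).trans ?_
    simp [Subtype.ext_iff, eq_comm]

end LieMonomials

/-- The restriction map from the `ℤ`-linear dual of `T_{1,…,1}` to the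
`ℤ`-linear dual of `Lie(n)` is surjective: every `ℤ`-linear functional on `Lie(n)`
extends to a `ℤ`-linear functional on `T_{1,…,1}`. -/
theorem statement4 (n : ℕ) (φ : ↥(LieN n) →ₗ[ℤ] ℤ) :
    ∃ ψ : ↥(T11 n) →ₗ[ℤ] ℤ,
      ∀ (x : FreeAlgebra ℤ (Fin n)) (hx : x ∈ LieN n) (hx' : x ∈ T11 n),
        ψ ⟨x, hx'⟩ = φ ⟨x, hx⟩ := by
  obtain ⟨ψ, hψ⟩ := LieN.exists_extend φ
  exact ⟨ψ ∘ₗ (T11 n).subtype, fun x hx _ => LinearMap.congr_fun hψ ⟨x, hx⟩⟩
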